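/- arXiv:q-bio/0312017 — 8 statements merged into one kernel-verified Lean document; each statement's English description precedes it below -/
import Mathlib

section
/- Let n ≥ 2 be an integer, 0 ≤ μ ≤ 1, and j ≥ 1 an integer. Then 1 - n·(1 - ((n-1)/n)·μ)^j + (n-1)·(1-μ)^j ≥ 0, with equality when j = 1. -/
/-! Writing `ν = 1 - μ`, the middle base is `1 - (n-1)/n * μ = (1 + (n-1) ν) / n`, the average of
`1` and `n - 1` copies of `ν`. Jensen's inequality for the convex function `t ↦ t ^ j` on `[0, ∞)`
then gives `n * ((1 + (n-1) ν) / n) ^ j ≤ 1 + (n-1) ν ^ j`, which is the claim. -/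

theorem ConvexOn.mul_map_average_le {s : Set ℝ} {f : ℝ → ℝ} (hf : ConvexOn ℝ s f)
    {a b : ℝ} (ha : a ∈ s) (hb : b ∈ s) {c : ℝ} (hc : 1 ≤ c) :
    c * f ((a + (c - 1) * b) / c) ≤ f a + (c - 1) * f b := by
  have hc0 : 0 < c := by linarith
  have hjensen := hf.2 ha hb (inv_nonneg.2 hc0.le) (div_nonneg (sub_nonneg.2 hc) hc0.le)
    (by field_simp; ring)
  simp only [smul_eq_mul] at hjensen
  have havg : c⁻¹ * a + (c - 1) / c * b = (a + (c - 1) * b) / c := by field_simp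
  rw [havg] at hjensen
  calc c * f ((a + (c - 1) * b) / c)
      ≤ c * (c⁻¹ * f a + (c - 1) / c * f b) := mul_le_mul_of_nonneg_left hjensen hc0.le
    _ = f a + (c - 1) * f b := by field_simp

theorem link_prob_nonneg_general (n : ℕ) (hn : 2 ≤ n) (μ : ℝ) (hμ1 : μ ≤ 1)
    (j : ℕ) :
    0 ≤ 1 - (n : ℝ) * (1 - ((n : ℝ) - 1) / n * μ) ^ j + ((n : ℝ) - 1) * (1 - μ) ^ j ∧
    (j = 1 → 1 - (n : ℝ) * (1 - ((n : ℝ) - 1) / n * μ) ^ j + ((n : ℝ) - 1) * (1 - μ) ^ j = 0) := by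
  have hn1 : (1 : ℝ) ≤ n := by exact_mod_cast (by omega : 1 ≤ n)
  have hbase : 1 - ((n : ℝ) - 1) / n * μ = (1 + ((n : ℝ) - 1) * (1 - μ)) / n := by
    field_simp; ring
  refine ⟨?_, fun hj => ?_⟩
  · have hjensen := (convexOn_pow j).mul_map_average_le (Set.mem_Ici.2 zero_le_one)
      (Set.mem_Ici.2 (sub_nonneg.2 hμ1)) hn1
    rw [one_pow, ← hbase] at hjensen
    linarith
  · subst hj
    rw [pow_one, pow_one, hbase]
    field_simp
    ring

theorem link_prob_nonneg (n : ℕ) (hn : 2 ≤ n) (μ : ℝ) (hμ0 : 0 ≤ μ) (hμ1 : μ ≤ 1)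
    (j : ℕ) (hj : 1 ≤ j) :
    0 ≤ 1 - (n : ℝ) * (1 - ((n : ℝ) - 1) / n * μ) ^ j + ((n : ℝ) - 1) * (1 - μ) ^ j ∧
    (j = 1 → 1 - (n : ℝ) * (1 - ((n : ℝ) - 1) / n * μ) ^ j + ((n : ℝ) - 1) * (1 - μ) ^ j = 0) :=
  link_prob_nonneg_general n hn μ hμ1 j
end

section
/- Fix an integer n ≥ 2, reals 0 < μ ≤ 1 and 0 < J < 1 with (1-J)(1 - ((n-1)/n)μ) < 1 and (1-J)(1-μ) < 1. Then ∑_{j=1}^∞ [1 - n(1 - ((n-1)/n)μ)^j + (n-1)(1-μ)^j]·(1-J)^{j-1}·J = 1 - nJ(1 - ((n-1)/n)μ)/(1 - (1-J)(1 - ((n-1)/n)μ)) + (n-1)J(1-μ)/(1 - (1-J)(1-μ)). -/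
theorem p_link_closed_form (n : ℕ) (hn : 2 ≤ n) (μ J : ℝ)
    (hμ0 : 0 < μ) (hμ1 : μ ≤ 1) (hJ0 : 0 < J) (hJ1 : J < 1)
    (h1 : (1 - J) * (1 - ((n : ℝ) - 1) / n * μ) < 1)
    (h2 : (1 - J) * (1 - μ) < 1) :
    (∑' j : ℕ,
        (1 - (n : ℝ) * (1 - ((n : ℝ) - 1) / n * μ) ^ (j + 1)
          + ((n : ℝ) - 1) * (1 - μ) ^ (j + 1)) * (1 - J) ^ j * J)
      = 1 - (n : ℝ) * J * (1 - ((n : ℝ) - 1) / n * μ)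
            / (1 - (1 - J) * (1 - ((n : ℝ) - 1) / n * μ))
        + ((n : ℝ) - 1) * J * (1 - μ) / (1 - (1 - J) * (1 - μ)) := by
  set a : ℝ := 1 - ((n : ℝ) - 1) / n * μ with ha
  set b : ℝ := 1 - μ with hb
  have hn0 : (0:ℝ) < n := by positivity
  have hfrac : ((n : ℝ) - 1) / n * μ ≤ 1 := by
    have h1' : ((n : ℝ) - 1) / n < 1 := by
      rw [div_lt_one hn0]; linarith
    nlinarith
  have ha0 : 0 ≤ a := by simp only [ha]; linarith
  have hb0 : 0 ≤ b := by simp only [hb]; linarith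
  have hJ0' : (0:ℝ) ≤ 1 - J := by linarith
  have hJlt : (1:ℝ) - J < 1 := by linarith
  have hr1 : 0 ≤ (1 - J) * a := mul_nonneg hJ0' ha0
  have hr2 : 0 ≤ (1 - J) * b := mul_nonneg hJ0' hb0
  have s0 : Summable (fun j : ℕ => (1 - J) ^ j) :=
    summable_geometric_of_lt_one hJ0' hJlt
  have s1 : Summable (fun j : ℕ => ((1 - J) * a) ^ j) :=
    summable_geometric_of_lt_one hr1 h1
  have s2 : Summable (fun j : ℕ => ((1 - J) * b) ^ j) :=
    summable_geometric_of_lt_one hr2 h2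
  have key : (fun j : ℕ =>
      (1 - (n : ℝ) * a ^ (j + 1) + ((n : ℝ) - 1) * b ^ (j + 1)) * (1 - J) ^ j * J)
      = fun j : ℕ => (J * (1 - J) ^ j - (n : ℝ) * a * J * ((1 - J) * a) ^ j)
        + ((n : ℝ) - 1) * b * J * ((1 - J) * b) ^ j := by
    funext j
    rw [mul_pow, mul_pow, pow_succ, pow_succ]
    ring
  rw [key]
  rw [Summable.tsum_add ((s0.mul_left J).sub (s1.mul_left _)) (s2.mul_left _),
    Summable.tsum_sub (s0.mul_left J) (s1.mul_left _),
    tsum_mul_left, tsum_mul_left, tsum_mul_left,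
    tsum_geometric_of_lt_one hJ0' hJlt,
    tsum_geometric_of_lt_one hr1 h1,
    tsum_geometric_of_lt_one hr2 h2]
  have e0 : (1 - (1 - J)) = J := by ring
  rw [e0]
  have hJne : J ≠ 0 := ne_of_gt hJ0
  have h1ne : (1 - (1 - J) * a) ≠ 0 := by linarith
  have h2ne : (1 - (1 - J) * b) ≠ 0 := by linarith
  field_simp
end

section
/- Let n ≥ 2 and 0 < J < 1, and set μ = 1. Then the conditional expected number of reads E[M | linked] = J^{-1} + (1 + 1/(n-1))/(1 + J/(n-1)) satisfies J^{-1} < E[M | linked] ≤ 2/J. -/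
theorem n_link_bounds (n : ℕ) (hn : 2 ≤ n) (J : ℝ) (hJ0 : 0 < J) (hJ1 : J < 1) :
    J⁻¹ < J⁻¹ + (1 + 1 / ((n : ℝ) - 1)) / (1 + J / ((n : ℝ) - 1)) ∧
    J⁻¹ + (1 + 1 / ((n : ℝ) - 1)) / (1 + J / ((n : ℝ) - 1)) ≤ 2 / J := by
  have hm : (1 : ℝ) ≤ (n : ℝ) - 1 := by
    have : (2 : ℝ) ≤ (n : ℝ) := by exact_mod_cast hn
    linarith
  have hm0 : (0 : ℝ) < (n : ℝ) - 1 := by linarith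
  have hnum : (0 : ℝ) < 1 + 1 / ((n : ℝ) - 1) := by positivity
  have hden : (0 : ℝ) < 1 + J / ((n : ℝ) - 1) := by positivity
  constructor
  · have : 0 < (1 + 1 / ((n : ℝ) - 1)) / (1 + J / ((n : ℝ) - 1)) := div_pos hnum hden
    linarith
  · have hkey : (1 + 1 / ((n : ℝ) - 1)) / (1 + J / ((n : ℝ) - 1)) ≤ 1 / J := by
      rw [div_le_div_iff₀ hden hJ0]
      have : J / ((n : ℝ) - 1) = J * (1 / ((n : ℝ) - 1)) := by ring
      nlinarith [hJ1, hm0, mul_pos hJ0 (show (0:ℝ) < 1/((n:ℝ)-1) by positivity)]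
    have h2 : 2 / J = J⁻¹ + 1 / J := by field_simp; ring
    linarith [hkey]
end

section
/- Let n ≥ 2 be an integer and 0 < μ ≤ 1. Define m(x) for 0 < x < 1 by m(x) = (n·X₁/Y₁² - (n-1)·X₂/Y₂²)/(n·X₁/Y₁ - (n-1)·X₂/Y₂), where X₁ = 1 - ((n-1)/n)μ, X₂ = 1 - μ, Y_i = 1 - (1-x)X_i. Then as x → 0⁺ (corresponding to coverage → ∞), m(x) converges to μ^{-1}·[(3n²-3n+1) - μ(2n²-3n+1)] / [(2n²-3n+1) - μ(n²-2n+1)] when μ < 1. -/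
open Filter Topology

theorem n_nolink_limit (n : ℕ) (hn : 2 ≤ n) (μ : ℝ) (hμ0 : 0 < μ) (hμ1 : μ < 1) :
    Tendsto
      (fun x : ℝ =>
        ((n : ℝ) * (1 - ((n : ℝ) - 1) / n * μ) / (1 - (1 - x) * (1 - ((n : ℝ) - 1) / n * μ)) ^ 2
            - ((n : ℝ) - 1) * (1 - μ) / (1 - (1 - x) * (1 - μ)) ^ 2)
          / ((n : ℝ) * (1 - ((n : ℝ) - 1) / n * μ) / (1 - (1 - x) * (1 - ((n : ℝ) - 1) / n * μ))
            - ((n : ℝ) - 1) * (1 - μ) / (1 - (1 - x) * (1 - μ))))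
      (𝓝[>] 0)
      (𝓝 (μ⁻¹ * ((3 * (n : ℝ) ^ 2 - 3 * n + 1) - μ * (2 * (n : ℝ) ^ 2 - 3 * n + 1))
            / ((2 * (n : ℝ) ^ 2 - 3 * n + 1) - μ * ((n : ℝ) ^ 2 - 2 * n + 1)))) := by
  have hN : (2:ℝ) ≤ (n:ℝ) := by exact_mod_cast hn
  have hNpos : (0:ℝ) < (n:ℝ) := by linarith
  have hN0 : (n:ℝ) ≠ 0 := ne_of_gt hNpos
  have hN1 : (0:ℝ) < (n:ℝ) - 1 := by linarith
  have hμ0' : μ ≠ 0 := ne_of_gt hμ0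
  set F : ℝ → ℝ := fun x : ℝ =>
        ((n : ℝ) * (1 - ((n : ℝ) - 1) / n * μ) / (1 - (1 - x) * (1 - ((n : ℝ) - 1) / n * μ)) ^ 2
            - ((n : ℝ) - 1) * (1 - μ) / (1 - (1 - x) * (1 - μ)) ^ 2)
          / ((n : ℝ) * (1 - ((n : ℝ) - 1) / n * μ) / (1 - (1 - x) * (1 - ((n : ℝ) - 1) / n * μ))
            - ((n : ℝ) - 1) * (1 - μ) / (1 - (1 - x) * (1 - μ))) with hF
  -- denominator values at 0
  have hY1 : 1 - (1 - (0:ℝ)) * (1 - ((n : ℝ) - 1) / n * μ) = ((n:ℝ)-1)/n * μ := by ring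
  have hY1pos : (0:ℝ) < ((n:ℝ)-1)/n * μ := by positivity
  have hY1ne : 1 - (1 - (0:ℝ)) * (1 - ((n : ℝ) - 1) / n * μ) ≠ 0 := by
    rw [hY1]; exact ne_of_gt hY1pos
  have hY2 : 1 - (1 - (0:ℝ)) * (1 - μ) = μ := by ring
  have hY2ne : 1 - (1 - (0:ℝ)) * (1 - μ) ≠ 0 := by rw [hY2]; exact hμ0'
  have hnum_pos : (0:ℝ) < (2*(n:ℝ)-1) - μ*((n:ℝ)-1) := by nlinarith
  have hdenval :
      (n : ℝ) * (1 - ((n : ℝ) - 1) / n * μ) / (1 - (1 - (0:ℝ)) * (1 - ((n : ℝ) - 1) / n * μ))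
        - ((n : ℝ) - 1) * (1 - μ) / (1 - (1 - (0:ℝ)) * (1 - μ))
      = ((2*(n:ℝ)-1) - μ*((n:ℝ)-1)) / (((n:ℝ)-1)*μ) := by
    rw [hY1, hY2]
    field_simp
    ring
  have hdenne :
      (n : ℝ) * (1 - ((n : ℝ) - 1) / n * μ) / (1 - (1 - (0:ℝ)) * (1 - ((n : ℝ) - 1) / n * μ))
        - ((n : ℝ) - 1) * (1 - μ) / (1 - (1 - (0:ℝ)) * (1 - μ)) ≠ 0 := by
    rw [hdenval]
    positivity
  have hcont : ContinuousAt F 0 := by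
    apply ContinuousAt.div
    · apply ContinuousAt.sub
      · exact (continuousAt_const.div (by fun_prop) (pow_ne_zero 2 hY1ne))
      · exact (continuousAt_const.div (by fun_prop) (pow_ne_zero 2 hY2ne))
    · apply ContinuousAt.sub
      · exact (continuousAt_const.div (by fun_prop) hY1ne)
      · exact (continuousAt_const.div (by fun_prop) hY2ne)
    · exact hdenne
  have hval : F 0 = μ⁻¹ * ((3 * (n : ℝ) ^ 2 - 3 * n + 1) - μ * (2 * (n : ℝ) ^ 2 - 3 * n + 1))
            / ((2 * (n : ℝ) ^ 2 - 3 * n + 1) - μ * ((n : ℝ) ^ 2 - 2 * n + 1)) := by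
    have hd2 : ((2:ℝ) * (n:ℝ) ^ 2 - 3 * n + 1) - μ * ((n:ℝ) ^ 2 - 2 * n + 1) ≠ 0 := by
      have : ((2:ℝ) * (n:ℝ) ^ 2 - 3 * n + 1) - μ * ((n:ℝ) ^ 2 - 2 * n + 1)
          = ((n:ℝ)-1) * ((2*(n:ℝ)-1) - μ*((n:ℝ)-1)) := by ring
      rw [this]; positivity
    rw [hF]
    simp only
    rw [hY1, hY2]
    rw [div_eq_div_iff]
    · field_simp
      ring
    · have h1 : (n:ℝ) * (1 - ((n : ℝ) - 1) / n * μ) / (((n:ℝ)-1)/n * μ)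
          - ((n : ℝ) - 1) * (1 - μ) / μ = ((2*(n:ℝ)-1) - μ*((n:ℝ)-1)) / (((n:ℝ)-1)*μ) := by
        field_simp
        ring
      rw [h1]; positivity
    · exact hd2
  rw [← hval]
  exact hcont.tendsto.mono_left nhdsWithin_le_nhds
end

section
/- Let n ≥ 2, 0 ≤ μ₂ ≤ 1, and j ≥ 1. Then q(j) = 2nβ₁^j - 2(n-1)β₂^j - n²β₃^j + 2n(n-1)β₄^j - (n-1)²β₅^j satisfies 0 ≤ q(j) ≤ 1, where β₁,…,β₅ are as defined above. -/
namespace QProbAux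

lemma sum_prod_fn (j : ℕ) {V : Type*} [Fintype V] [DecidableEq V] (g : V → ℝ) :
    ∑ f : Fin j → V, ∏ r, g (f r) = (∑ v, g v) ^ j := by
  classical
  rw [← Fintype.piFinset_univ, ← Finset.prod_univ_sum (fun _ : Fin j => Finset.univ) (fun _ v => g v)]
  simp [Finset.prod_const]

abbrev V (n : ℕ) := Option (Fin n ⊕ Fin n)

variable (n : ℕ)

def w (x : ℝ) : V n → ℝ
  | none => 1 - 2 * n * x
  | some _ => x

def aOK (i : Fin n) : V n → ℝ
  | some (Sum.inl i') => if i' = i then 1 else 0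
  | _ => 1

def aN : V n → ℝ
  | some (Sum.inl _) => 0
  | _ => 1

def bOK (k : Fin n) : V n → ℝ
  | some (Sum.inr k') => if k' = k then 1 else 0
  | _ => 1

def bN : V n → ℝ
  | some (Sum.inr _) => 0
  | _ => 1

lemma sum_V (g : V n → ℝ) :
    ∑ v, g v = g none + ∑ i : Fin n, g (some (Sum.inl i)) + ∑ k : Fin n, g (some (Sum.inr k)) := by
  rw [Fintype.sum_option, Fintype.sum_sum_type, add_assoc]

variable {x : ℝ}

lemma base_w : ∑ v, w n x v = 1 := by
  rw [sum_V]; simp [w, Finset.sum_const]; ring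

lemma base_a (i : Fin n) : ∑ v, w n x v * aOK n i v = 1 - ((n : ℝ) - 1) * x := by
  rw [sum_V]; simp [w, aOK, mul_ite, Finset.sum_ite_eq, Finset.sum_const]; ring

lemma base_aN : ∑ v, w n x v * aN n v = 1 - (n : ℝ) * x := by
  rw [sum_V]; simp [w, aN, Finset.sum_const]; ring

lemma base_ab (i k : Fin n) :
    ∑ v, w n x v * (aOK n i v * bOK n k v) = 1 - 2 * ((n : ℝ) - 1) * x := by
  rw [sum_V]; simp [w, aOK, bOK, mul_ite, Finset.sum_ite_eq, Finset.sum_const]; ring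

lemma base_abN (i : Fin n) :
    ∑ v, w n x v * (aOK n i v * bN n v) = 1 - (2 * (n : ℝ) - 1) * x := by
  rw [sum_V]; simp [w, aOK, bN, mul_ite, Finset.sum_ite_eq, Finset.sum_const]; ring

lemma base_aNb (k : Fin n) :
    ∑ v, w n x v * (aN n v * bOK n k v) = 1 - (2 * (n : ℝ) - 1) * x := by
  rw [sum_V]; simp [w, aN, bOK, mul_ite, Finset.sum_ite_eq, Finset.sum_const]; ring

lemma base_NN : ∑ v, w n x v * (aN n v * bN n v) = 1 - 2 * (n : ℝ) * x := by
  rw [sum_V]; simp [w, aN, bN, Finset.sum_const]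

lemma aOK01 (i : Fin n) (v : V n) : aOK n i v = 0 ∨ aOK n i v = 1 := by
  rcases v with _ | (i' | k') <;> simp [aOK]
  exact (Decidable.em _).symm.imp id id

lemma aN01 (v : V n) : aN n v = 0 ∨ aN n v = 1 := by
  rcases v with _ | (i' | k') <;> simp [aN]

lemma bOK01 (k : Fin n) (v : V n) : bOK n k v = 0 ∨ bOK n k v = 1 := by
  rcases v with _ | (i' | k') <;> simp [bOK]
  exact (Decidable.em _).symm.imp id id

lemma bN01 (v : V n) : bN n v = 0 ∨ bN n v = 1 := by
  rcases v with _ | (i' | k') <;> simp [bN]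

lemma aOK_mul (i i' : Fin n) (h : i ≠ i') (v : V n) :
    aOK n i v * aOK n i' v = aN n v := by
  rcases v with _ | (i'' | k'') <;> simp [aOK, aN]
  intro h1 h2; exact h (h1 ▸ h2 ▸ rfl)

lemma bOK_mul (k k' : Fin n) (h : k ≠ k') (v : V n) :
    bOK n k v * bOK n k' v = bN n v := by
  rcases v with _ | (i'' | k'') <;> simp [bOK, bN]
  intro h1 h2; exact h (h1 ▸ h2 ▸ rfl)

lemma w_nonneg (hx : 0 ≤ x) (hx2 : 2 * (n:ℝ) * x ≤ 1) (v : V n) : 0 ≤ w n x v := by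
  rcases v with _ | v <;> simp [w] <;> linarith

lemma prod01 {ι : Type*} (s : Finset ι) (g : ι → ℝ) (h : ∀ r ∈ s, g r = 0 ∨ g r = 1) :
    (∏ r ∈ s, g r) = 0 ∨ (∏ r ∈ s, g r) = 1 := by
  classical
  induction s using Finset.induction_on with
  | empty => simp
  | @insert a s' hni ih =>
    rw [Finset.prod_insert hni]
    rcases h a (Finset.mem_insert_self a s') with h0 | h1
    · left; rw [h0, zero_mul]
    · rw [h1, one_mul]; exact ih fun r hr => h r (Finset.mem_insert_of_mem hr)

end QProbAux

set_option maxHeartbeats 1000000 in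
open QProbAux in
theorem main_aux (n j : ℕ) (hn : 2 ≤ n) (x : ℝ) (hx : 0 ≤ x) (hx2 : 2 * (n:ℝ) * x ≤ 1) :
    0 ≤ 2 * (n:ℝ) * (1 - ((n:ℝ)-1)*x) ^ j - 2 * ((n:ℝ)-1) * (1 - (n:ℝ)*x) ^ j
        - (n:ℝ) ^ 2 * (1 - 2*((n:ℝ)-1)*x) ^ j + 2 * (n:ℝ) * ((n:ℝ)-1) * (1 - (2*(n:ℝ)-1)*x) ^ j
        - ((n:ℝ)-1) ^ 2 * (1 - 2*(n:ℝ)*x) ^ j ∧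
      2 * (n:ℝ) * (1 - ((n:ℝ)-1)*x) ^ j - 2 * ((n:ℝ)-1) * (1 - (n:ℝ)*x) ^ j
        - (n:ℝ) ^ 2 * (1 - 2*((n:ℝ)-1)*x) ^ j + 2 * (n:ℝ) * ((n:ℝ)-1) * (1 - (2*(n:ℝ)-1)*x) ^ j
        - ((n:ℝ)-1) ^ 2 * (1 - 2*(n:ℝ)*x) ^ j ≤ 1 := by
  classical
  set W : (Fin j → V n) → ℝ := fun f => ∏ r, w n x (f r) with hW
  set PA : Fin n → (Fin j → V n) → ℝ := fun i f => ∏ r, aOK n i (f r) with hPA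
  set PB : Fin n → (Fin j → V n) → ℝ := fun k f => ∏ r, bOK n k (f r) with hPB
  set QA : (Fin j → V n) → ℝ := fun f => ∏ r, aN n (f r) with hQA
  set QB : (Fin j → V n) → ℝ := fun f => ∏ r, bN n (f r) with hQB
  set sA : (Fin j → V n) → ℝ := fun f => ∑ i, PA i f with hsA
  set sB : (Fin j → V n) → ℝ := fun f => ∑ k, PB k f with hsB
  set T : (Fin j → V n) → ℝ := fun f =>
    sA f + sB f - ((n:ℝ)-1) * (QA f + QB f) - sA f * sB f
      + ((n:ℝ)-1) * (sA f * QB f + QA f * sB f) - ((n:ℝ)-1)^2 * (QA f * QB f) with hT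
  -- generic weighted sum lemma
  have sumWp : ∀ g : V n → ℝ,
      ∑ f : Fin j → V n, W f * (∏ r, g (f r)) = (∑ v, w n x v * g v) ^ j := by
    intro g
    have e : ∀ f : Fin j → V n, W f * (∏ r, g (f r)) = ∏ r, (w n x (f r) * g (f r)) :=
      fun f => Finset.prod_mul_distrib.symm
    simp only [e]
    exact sum_prod_fn j fun v => w n x v * g v
  -- single-event sums
  have SA : ∀ i : Fin n, ∑ f : Fin j → V n, W f * PA i f = (1 - ((n:ℝ)-1)*x) ^ j := by
    intro i; rw [hPA]; rw [sumWp (aOK n i), base_a]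
  have SB : ∀ k : Fin n, ∑ f : Fin j → V n, W f * PB k f = (1 - ((n:ℝ)-1)*x) ^ j := by
    intro k; rw [hPB]
    have : ∑ v, w n x v * bOK n k v = 1 - ((n:ℝ)-1)*x := by
      rw [sum_V]; simp [w, bOK, mul_ite, Finset.sum_ite_eq, Finset.sum_const]; ring
    rw [sumWp (bOK n k), this]
  have SQA : ∑ f : Fin j → V n, W f * QA f = (1 - (n:ℝ)*x) ^ j := by
    rw [hQA]; rw [sumWp (aN n), base_aN]
  have SQB : ∑ f : Fin j → V n, W f * QB f = (1 - (n:ℝ)*x) ^ j := by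
    rw [hQB]
    have : ∑ v, w n x v * bN n v = 1 - (n:ℝ)*x := by
      rw [sum_V]; simp [w, bN, Finset.sum_const]; ring
    rw [sumWp (bN n), this]
  have Spair : ∀ (i k : Fin n),
      ∑ f : Fin j → V n, W f * (PA i f * PB k f) = (1 - 2*((n:ℝ)-1)*x) ^ j := by
    intro i k
    have e : ∀ f : Fin j → V n, PA i f * PB k f = ∏ r, (aOK n i (f r) * bOK n k (f r)) := by
      intro f; rw [hPA, hPB]; exact Finset.prod_mul_distrib.symm
    simp only [e]
    rw [sumWp (fun v => aOK n i v * bOK n k v), base_ab]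
  have SpairAQ : ∀ i : Fin n,
      ∑ f : Fin j → V n, W f * (PA i f * QB f) = (1 - (2*(n:ℝ)-1)*x) ^ j := by
    intro i
    have e : ∀ f : Fin j → V n, PA i f * QB f = ∏ r, (aOK n i (f r) * bN n (f r)) := by
      intro f; rw [hPA, hQB]; exact Finset.prod_mul_distrib.symm
    simp only [e]
    rw [sumWp (fun v => aOK n i v * bN n v), base_abN]
  have SpairQB : ∀ k : Fin n,
      ∑ f : Fin j → V n, W f * (QA f * PB k f) = (1 - (2*(n:ℝ)-1)*x) ^ j := by
    intro k
    have e : ∀ f : Fin j → V n, QA f * PB k f = ∏ r, (aN n (f r) * bOK n k (f r)) := by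
      intro f; rw [hQA, hPB]; exact Finset.prod_mul_distrib.symm
    simp only [e]
    rw [sumWp (fun v => aN n v * bOK n k v), base_aNb]
  have SQQ : ∑ f : Fin j → V n, W f * (QA f * QB f) = (1 - 2*(n:ℝ)*x) ^ j := by
    have e : ∀ f : Fin j → V n, QA f * QB f = ∏ r, (aN n (f r) * bN n (f r)) := by
      intro f; rw [hQA, hQB]; exact Finset.prod_mul_distrib.symm
    simp only [e]
    rw [sumWp (fun v => aN n v * bN n v), base_NN]
  -- assembled sums
  have HsA : ∑ f : Fin j → V n, W f * sA f = (n:ℝ) * (1 - ((n:ℝ)-1)*x) ^ j := by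
    simp only [hsA, Finset.mul_sum]
    rw [Finset.sum_comm]
    rw [Finset.sum_congr rfl fun i _ => SA i, Finset.sum_const, Finset.card_univ,
      Fintype.card_fin, nsmul_eq_mul]
  have HsB : ∑ f : Fin j → V n, W f * sB f = (n:ℝ) * (1 - ((n:ℝ)-1)*x) ^ j := by
    simp only [hsB, Finset.mul_sum]
    rw [Finset.sum_comm]
    rw [Finset.sum_congr rfl fun k _ => SB k, Finset.sum_const, Finset.card_univ,
      Fintype.card_fin, nsmul_eq_mul]
  have HsAsB : ∑ f : Fin j → V n, W f * (sA f * sB f)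
      = (n:ℝ)^2 * (1 - 2*((n:ℝ)-1)*x) ^ j := by
    have e : ∀ f : Fin j → V n, W f * (sA f * sB f)
        = ∑ p : Fin n × Fin n, W f * (PA p.1 f * PB p.2 f) := by
      intro f
      rw [← Finset.mul_sum]
      congr 1
      rw [hsA, hsB, Finset.sum_mul_sum, Fintype.sum_prod_type]
    simp only [e]
    rw [Finset.sum_comm]
    rw [Finset.sum_congr rfl fun p _ => Spair p.1 p.2, Finset.sum_const, Finset.card_univ,
      Fintype.card_prod, Fintype.card_fin, nsmul_eq_mul]
    push_cast
    ring
  have HsAQB : ∑ f : Fin j → V n, W f * (sA f * QB f)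
      = (n:ℝ) * (1 - (2*(n:ℝ)-1)*x) ^ j := by
    have e : ∀ f : Fin j → V n, W f * (sA f * QB f) = ∑ i, W f * (PA i f * QB f) := by
      intro f
      rw [← Finset.mul_sum]
      congr 1
      rw [hsA, Finset.sum_mul]
    simp only [e]
    rw [Finset.sum_comm]
    rw [Finset.sum_congr rfl fun i _ => SpairAQ i, Finset.sum_const, Finset.card_univ,
      Fintype.card_fin, nsmul_eq_mul]
  have HQAsB : ∑ f : Fin j → V n, W f * (QA f * sB f)
      = (n:ℝ) * (1 - (2*(n:ℝ)-1)*x) ^ j := by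
    have e : ∀ f : Fin j → V n, W f * (QA f * sB f) = ∑ k, W f * (QA f * PB k f) := by
      intro f
      rw [← Finset.mul_sum]
      congr 1
      rw [hsB, Finset.mul_sum]
    simp only [e]
    rw [Finset.sum_comm]
    rw [Finset.sum_congr rfl fun k _ => SpairQB k, Finset.sum_const, Finset.card_univ,
      Fintype.card_fin, nsmul_eq_mul]
  -- the master identity
  have key : ∑ f : Fin j → V n, W f * T f
      = 2 * (n:ℝ) * (1 - ((n:ℝ)-1)*x) ^ j - 2 * ((n:ℝ)-1) * (1 - (n:ℝ)*x) ^ j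
        - (n:ℝ) ^ 2 * (1 - 2*((n:ℝ)-1)*x) ^ j
        + 2 * (n:ℝ) * ((n:ℝ)-1) * (1 - (2*(n:ℝ)-1)*x) ^ j
        - ((n:ℝ)-1) ^ 2 * (1 - 2*(n:ℝ)*x) ^ j := by
    have step : ∑ f : Fin j → V n, W f * T f
        = (∑ f : Fin j → V n, W f * sA f) + (∑ f : Fin j → V n, W f * sB f)
          - ((n:ℝ)-1) * ((∑ f : Fin j → V n, W f * QA f) + (∑ f : Fin j → V n, W f * QB f))
          - (∑ f : Fin j → V n, W f * (sA f * sB f))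
          + ((n:ℝ)-1) * ((∑ f : Fin j → V n, W f * (sA f * QB f))
              + (∑ f : Fin j → V n, W f * (QA f * sB f)))
          - ((n:ℝ)-1)^2 * (∑ f : Fin j → V n, W f * (QA f * QB f)) := by
      simp only [hT, Finset.mul_sum, ← Finset.sum_add_distrib, ← Finset.sum_sub_distrib]
      exact Finset.sum_congr rfl fun f _ => by ring
    rw [step, HsA, HsB, SQA, SQB, HsAsB, HsAQB, HQAsB, SQQ]
    ring
  -- pointwise structure
  have hPA01 : ∀ (i : Fin n) f, PA i f = 0 ∨ PA i f = 1 := by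
    intro i f; rw [hPA]; exact prod01 _ _ fun r _ => aOK01 n i (f r)
  have hPB01 : ∀ (k : Fin n) f, PB k f = 0 ∨ PB k f = 1 := by
    intro k f; rw [hPB]; exact prod01 _ _ fun r _ => bOK01 n k (f r)
  have hQA01 : ∀ f, QA f = 0 ∨ QA f = 1 := by
    intro f; rw [hQA]; exact prod01 _ _ fun r _ => aN01 n (f r)
  have hQB01 : ∀ f, QB f = 0 ∨ QB f = 1 := by
    intro f; rw [hQB]; exact prod01 _ _ fun r _ => bN01 n (f r)
  have hmulA : ∀ (i i' : Fin n), i ≠ i' → ∀ f, PA i f * PA i' f = QA f := by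
    intro i i' h f
    rw [hPA, hQA, ← Finset.prod_mul_distrib]
    exact Finset.prod_congr rfl fun r _ => aOK_mul n i i' h (f r)
  have hmulB : ∀ (k k' : Fin n), k ≠ k' → ∀ f, PB k f * PB k' f = QB f := by
    intro k k' h f
    rw [hPB, hQB, ← Finset.prod_mul_distrib]
    exact Finset.prod_congr rfl fun r _ => bOK_mul n k k' h (f r)
  have ntr : Nontrivial (Fin n) := Fin.nontrivial_iff_two_le.mpr hn
  have structA : ∀ f, (QA f = 1 ∧ sA f = (n:ℝ)) ∨ (QA f = 0 ∧ (sA f = 0 ∨ sA f = 1)) := by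
    intro f
    rcases hQA01 f with h0 | h1
    · right
      refine ⟨h0, ?_⟩
      by_cases hex : ∃ i₀, PA i₀ f = 1
      · obtain ⟨i₀, hi₀⟩ := hex
        right
        have hz : ∀ i, i ≠ i₀ → PA i f = 0 := by
          intro i hi
          have hm := hmulA i i₀ hi f
          rw [hi₀, mul_one, h0] at hm
          exact hm
        simp only [hsA]
        rw [Finset.sum_eq_single i₀ (fun b _ hb => hz b hb)
          (fun hmem => absurd (Finset.mem_univ i₀) hmem), hi₀]
      · left
        have hz : ∀ i, PA i f = 0 :=
          fun i => (hPA01 i f).resolve_right fun h => hex ⟨i, h⟩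
        simp only [hsA]
        simp [hz]
    · left
      refine ⟨h1, ?_⟩
      have hall : ∀ i, PA i f = 1 := by
        intro i
        obtain ⟨i', hi'⟩ := exists_ne i
        have hm := hmulA i' i hi' f
        rw [h1] at hm
        rcases hPA01 i f with hz | ho
        · rw [hz, mul_zero] at hm; norm_num at hm
        · exact ho
      simp only [hsA]
      simp [hall, Finset.sum_const, Fintype.card_fin, nsmul_eq_mul]
  have structB : ∀ f, (QB f = 1 ∧ sB f = (n:ℝ)) ∨ (QB f = 0 ∧ (sB f = 0 ∨ sB f = 1)) := by
    intro f
    rcases hQB01 f with h0 | h1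
    · right
      refine ⟨h0, ?_⟩
      by_cases hex : ∃ k₀, PB k₀ f = 1
      · obtain ⟨k₀, hk₀⟩ := hex
        right
        have hz : ∀ k, k ≠ k₀ → PB k f = 0 := by
          intro k hk
          have hm := hmulB k k₀ hk f
          rw [hk₀, mul_one, h0] at hm
          exact hm
        simp only [hsB]
        rw [Finset.sum_eq_single k₀ (fun b _ hb => hz b hb)
          (fun hmem => absurd (Finset.mem_univ k₀) hmem), hk₀]
      · left
        have hz : ∀ k, PB k f = 0 :=
          fun k => (hPB01 k f).resolve_right fun h => hex ⟨k, h⟩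
        simp only [hsB]
        simp [hz]
    · left
      refine ⟨h1, ?_⟩
      have hall : ∀ k, PB k f = 1 := by
        intro k
        obtain ⟨k', hk'⟩ := exists_ne k
        have hm := hmulB k' k hk' f
        rw [h1] at hm
        rcases hPB01 k f with hz | ho
        · rw [hz, mul_zero] at hm; norm_num at hm
        · exact ho
      simp only [hsB]
      simp [hall, Finset.sum_const, Fintype.card_fin, nsmul_eq_mul]
  have hnR : (2:ℝ) ≤ (n:ℝ) := by exact_mod_cast hn
  have hTbound : ∀ f, 0 ≤ T f ∧ T f ≤ 1 := by
    intro f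
    rcases structA f with ⟨ha1, ha2⟩ | ⟨ha1, ha2 | ha2⟩ <;>
      rcases structB f with ⟨hb1, hb2⟩ | ⟨hb1, hb2 | hb2⟩ <;>
      simp only [hT] <;> rw [ha1, ha2, hb1, hb2] <;>
      constructor <;> nlinarith [hnR]
  have hW0 : ∀ f, 0 ≤ W f := by
    intro f; rw [hW]
    exact Finset.prod_nonneg fun r _ => w_nonneg n hx hx2 (f r)
  have hWsum : ∑ f : Fin j → V n, W f = 1 := by
    rw [hW, sum_prod_fn j (w n x), base_w, one_pow]
  constructor
  · rw [← key]
    exact Finset.sum_nonneg fun f _ => mul_nonneg (hW0 f) (hTbound f).1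
  · rw [← key, ← hWsum]
    exact Finset.sum_le_sum fun f _ => mul_le_of_le_one_right (hW0 f) (hTbound f).2

theorem q_is_probability (n : ℕ) (hn : 2 ≤ n) (μ₂ : ℝ) (hμ0 : 0 ≤ μ₂) (hμ1 : μ₂ ≤ 1)
    (j : ℕ) (hj : 1 ≤ j) :
    let β₁ : ℝ := 1 - ((n : ℝ) - 1) / (2 * n) * μ₂
    let β₂ : ℝ := 1 - μ₂ / 2
    let β₃ : ℝ := 1 - ((n : ℝ) - 1) / n * μ₂
    let β₄ : ℝ := 1 - ((n : ℝ) - 1 / 2) / n * μ₂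
    let β₅ : ℝ := 1 - μ₂
    0 ≤ 2 * n * β₁ ^ j - 2 * ((n : ℝ) - 1) * β₂ ^ j - (n : ℝ) ^ 2 * β₃ ^ j
        + 2 * n * ((n : ℝ) - 1) * β₄ ^ j - ((n : ℝ) - 1) ^ 2 * β₅ ^ j ∧
    2 * n * β₁ ^ j - 2 * ((n : ℝ) - 1) * β₂ ^ j - (n : ℝ) ^ 2 * β₃ ^ j
        + 2 * n * ((n : ℝ) - 1) * β₄ ^ j - ((n : ℝ) - 1) ^ 2 * β₅ ^ j ≤ 1 := by
  intro β₁ β₂ β₃ β₄ β₅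
  have hn0 : (n : ℝ) ≠ 0 := Nat.cast_ne_zero.mpr (by omega)
  set x : ℝ := μ₂ / (2 * n) with hxdef
  have hx : 0 ≤ x := div_nonneg hμ0 (by positivity)
  have hmul : 2 * (n:ℝ) * x = μ₂ := by rw [hxdef]; field_simp
  have hx2 : 2 * (n:ℝ) * x ≤ 1 := by rw [hmul]; exact hμ1
  have e1 : β₁ = 1 - ((n:ℝ) - 1) * x := by
    show (1 : ℝ) - ((n : ℝ) - 1) / (2 * n) * μ₂ = 1 - ((n:ℝ) - 1) * x
    rw [hxdef]; ring
  have e2 : β₂ = 1 - (n:ℝ) * x := by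
    show (1 : ℝ) - μ₂ / 2 = 1 - (n:ℝ) * x
    rw [hxdef]; field_simp
  have e3 : β₃ = 1 - 2 * ((n:ℝ) - 1) * x := by
    show (1 : ℝ) - ((n : ℝ) - 1) / n * μ₂ = 1 - 2 * ((n:ℝ) - 1) * x
    rw [hxdef]; field_simp
  have e4 : β₄ = 1 - (2 * (n:ℝ) - 1) * x := by
    show (1 : ℝ) - ((n : ℝ) - 1 / 2) / n * μ₂ = 1 - (2 * (n:ℝ) - 1) * x
    have hq : ((n:ℝ) - 1 / 2) / n = (2 * (n:ℝ) - 1) / (2 * n) := by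
      rw [div_eq_div_iff hn0 (by positivity)]; ring
    rw [hxdef, hq]; ring
  have e5 : β₅ = 1 - 2 * (n:ℝ) * x := by
    show (1 : ℝ) - μ₂ = 1 - 2 * (n:ℝ) * x
    rw [hmul]
  rw [e1, e2, e3, e4, e5]
  exact main_aux n j hn x hx hx2
end

section
/- Fix n ≥ 2, 0 < μ₂ ≤ 1, 0 < J₂ < 1, with β_i as above and γ_i = 1 - (1-J₂)β_i for i = 1,…,5. Then ∑_{j=1}^∞ q(j)·(1-J₂)^{j-1}·J₂ = J₂·(2nβ₁/γ₁ - 2(n-1)β₂/γ₂ - n²β₃/γ₃ + 2n(n-1)β₄/γ₄ - (n-1)²β₅/γ₅). -/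
lemma geo_aux (β J : ℝ) (h0 : 0 ≤ β) (h1 : β ≤ 1) (hJ0 : 0 < J) (hJ1 : J < 1) :
    Summable (fun j : ℕ => β ^ (j + 1) * (1 - J) ^ j) ∧
    (∑' j : ℕ, β ^ (j + 1) * (1 - J) ^ j) = β / (1 - (1 - J) * β) := by
  have hJ' : 0 ≤ 1 - J := by linarith
  have hr0 : 0 ≤ (1 - J) * β := mul_nonneg hJ' h0
  have hr1 : (1 - J) * β < 1 := by
    rcases eq_or_lt_of_le h0 with h | h
    · rw [← h]; simpa using by linarith
    · calc (1 - J) * β < 1 * β := by nlinarith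
        _ ≤ 1 := by linarith
  have heq : (fun j : ℕ => β ^ (j + 1) * (1 - J) ^ j) = fun j : ℕ => β * ((1 - J) * β) ^ j := by
    funext j
    rw [mul_pow, pow_succ]
    ring
  constructor
  · rw [heq]
    exact (summable_geometric_of_lt_one hr0 hr1).mul_left β
  · rw [heq, tsum_mul_left, tsum_geometric_of_lt_one hr0 hr1]
    rw [div_eq_mul_inv]

theorem q_geometric_sum (n : ℕ) (hn : 2 ≤ n) (μ₂ J₂ : ℝ)
    (hμ0 : 0 < μ₂) (hμ1 : μ₂ ≤ 1) (hJ0 : 0 < J₂) (hJ1 : J₂ < 1) :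
    let β₁ : ℝ := 1 - ((n : ℝ) - 1) / (2 * n) * μ₂
    let β₂ : ℝ := 1 - μ₂ / 2
    let β₃ : ℝ := 1 - ((n : ℝ) - 1) / n * μ₂
    let β₄ : ℝ := 1 - ((n : ℝ) - 1 / 2) / n * μ₂
    let β₅ : ℝ := 1 - μ₂
    let γ₁ : ℝ := 1 - (1 - J₂) * β₁
    let γ₂ : ℝ := 1 - (1 - J₂) * β₂
    let γ₃ : ℝ := 1 - (1 - J₂) * β₃
    let γ₄ : ℝ := 1 - (1 - J₂) * β₄
    let γ₅ : ℝ := 1 - (1 - J₂) * β₅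
    (∑' j : ℕ,
        (2 * n * β₁ ^ (j + 1) - 2 * ((n : ℝ) - 1) * β₂ ^ (j + 1) - (n : ℝ) ^ 2 * β₃ ^ (j + 1)
            + 2 * n * ((n : ℝ) - 1) * β₄ ^ (j + 1) - ((n : ℝ) - 1) ^ 2 * β₅ ^ (j + 1))
          * (1 - J₂) ^ j * J₂)
      = J₂ * (2 * n * β₁ / γ₁ - 2 * ((n : ℝ) - 1) * β₂ / γ₂ - (n : ℝ) ^ 2 * β₃ / γ₃
          + 2 * n * ((n : ℝ) - 1) * β₄ / γ₄ - ((n : ℝ) - 1) ^ 2 * β₅ / γ₅) := by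
  intro β₁ β₂ β₃ β₄ β₅ γ₁ γ₂ γ₃ γ₄ γ₅
  have hn1 : (1 : ℝ) ≤ (n : ℝ) := by exact_mod_cast Nat.one_le_of_lt hn
  have hn0 : (0 : ℝ) < (n : ℝ) := by linarith
  have hb1 : 0 ≤ β₁ ∧ β₁ ≤ 1 := by
    constructor
    · have h : ((n : ℝ) - 1) / (2 * n) * μ₂ ≤ 1 :=
        mul_le_one₀ (by rw [div_le_one (by linarith)]; linarith) hμ0.le hμ1
      simp only [β₁]; linarith
    · have : 0 ≤ ((n : ℝ) - 1) / (2 * n) * μ₂ :=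
        mul_nonneg (div_nonneg (by linarith) (by linarith)) hμ0.le
      simp only [β₁]; linarith
  have hb2 : 0 ≤ β₂ ∧ β₂ ≤ 1 := by constructor <;> simp only [β₂] <;> linarith
  have hb3 : 0 ≤ β₃ ∧ β₃ ≤ 1 := by
    constructor
    · have h : ((n : ℝ) - 1) / n * μ₂ ≤ 1 :=
        mul_le_one₀ (by rw [div_le_one hn0]; linarith) hμ0.le hμ1
      simp only [β₃]; linarith
    · have : 0 ≤ ((n : ℝ) - 1) / n * μ₂ :=
        mul_nonneg (div_nonneg (by linarith) hn0.le) hμ0.le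
      simp only [β₃]; linarith
  have hb4 : 0 ≤ β₄ ∧ β₄ ≤ 1 := by
    constructor
    · have h : ((n : ℝ) - 1 / 2) / n * μ₂ ≤ 1 :=
        mul_le_one₀ (by rw [div_le_one hn0]; linarith) hμ0.le hμ1
      simp only [β₄]; linarith
    · have : 0 ≤ ((n : ℝ) - 1 / 2) / n * μ₂ :=
        mul_nonneg (div_nonneg (by linarith) hn0.le) hμ0.le
      simp only [β₄]; linarith
  have hb5 : 0 ≤ β₅ ∧ β₅ ≤ 1 := by constructor <;> simp only [β₅] <;> linarith
  obtain ⟨s1, t1⟩ := geo_aux β₁ J₂ hb1.1 hb1.2 hJ0 hJ1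
  obtain ⟨s2, t2⟩ := geo_aux β₂ J₂ hb2.1 hb2.2 hJ0 hJ1
  obtain ⟨s3, t3⟩ := geo_aux β₃ J₂ hb3.1 hb3.2 hJ0 hJ1
  obtain ⟨s4, t4⟩ := geo_aux β₄ J₂ hb4.1 hb4.2 hJ0 hJ1
  obtain ⟨s5, t5⟩ := geo_aux β₅ J₂ hb5.1 hb5.2 hJ0 hJ1
  have expand : (fun j : ℕ =>
      (2 * n * β₁ ^ (j + 1) - 2 * ((n : ℝ) - 1) * β₂ ^ (j + 1) - (n : ℝ) ^ 2 * β₃ ^ (j + 1)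
            + 2 * n * ((n : ℝ) - 1) * β₄ ^ (j + 1) - ((n : ℝ) - 1) ^ 2 * β₅ ^ (j + 1))
          * (1 - J₂) ^ j * J₂)
      = fun j : ℕ =>
        ((2 * (n : ℝ) * (β₁ ^ (j + 1) * (1 - J₂) ^ j)
          - 2 * ((n : ℝ) - 1) * (β₂ ^ (j + 1) * (1 - J₂) ^ j)
          - (n : ℝ) ^ 2 * (β₃ ^ (j + 1) * (1 - J₂) ^ j)
          + 2 * n * ((n : ℝ) - 1) * (β₄ ^ (j + 1) * (1 - J₂) ^ j))
          - ((n : ℝ) - 1) ^ 2 * (β₅ ^ (j + 1) * (1 - J₂) ^ j)) * J₂ := by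
    funext j; ring
  rw [expand, tsum_mul_right]
  have S1 := s1.mul_left (2 * (n : ℝ))
  have S2 := s2.mul_left (2 * ((n : ℝ) - 1))
  have S3 := s3.mul_left ((n : ℝ) ^ 2)
  have S4 := s4.mul_left (2 * n * ((n : ℝ) - 1))
  have S5 := s5.mul_left (((n : ℝ) - 1) ^ 2)
  rw [Summable.tsum_sub (((S1.sub S2).sub S3).add S4) S5,
      Summable.tsum_add ((S1.sub S2).sub S3) S4,
      Summable.tsum_sub (S1.sub S2) S3, Summable.tsum_sub S1 S2,
      tsum_mul_left, tsum_mul_left, tsum_mul_left, tsum_mul_left, tsum_mul_left,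
      t1, t2, t3, t4, t5]
  show _ = J₂ * (2 * n * β₁ / γ₁ - 2 * ((n : ℝ) - 1) * β₂ / γ₂ - (n : ℝ) ^ 2 * β₃ / γ₃
          + 2 * n * ((n : ℝ) - 1) * β₄ / γ₄ - ((n : ℝ) - 1) ^ 2 * β₅ / γ₅)
  show (2 * (n : ℝ) * (β₁ / γ₁) - 2 * ((n : ℝ) - 1) * (β₂ / γ₂) - (n : ℝ) ^ 2 * (β₃ / γ₃)
        + 2 * n * ((n : ℝ) - 1) * (β₄ / γ₄) - ((n : ℝ) - 1) ^ 2 * (β₅ / γ₅)) * J₂ = _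
  ring
end

section
/- Let R be a Poisson random variable with mean λ > 0 and let 0 < α < 1 with k = αλ a positive integer. Then P(R ≤ αλ) < e^{-λ(1-α)²/2} / ((1-α)·√(2παλ)). -/
/-!
Since `k ≤ αλ`, going down from `r = k` each Poisson weight `λ^r / r!` shrinks at least by the
factor `α`, so the lower tail is dominated by a geometric series: it is below
`e^{-λ} λ^k / (k! (1 - α))`. Stirling's bound `k! ≥ √(2πk) (k/e)^k` turns `e^{-λ} λ^k / (k/e)^k`
into `exp (-λ (1 - α + α log α))`, and `1 - α + α log α ≥ (1 - α)² / 2` because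
`log α ≥ sinh (log α) = (α - α⁻¹) / 2` for `α ≤ 1`.
-/

open Real Finset
open scoped Nat

lemma pow_div_factorial_le_mul_pow_succ_div_factorial {lam α : ℝ} {k : ℕ} (hlam : 0 ≤ lam)
    (hk : (k + 1 : ℝ) ≤ α * lam) :
    lam ^ k / k ! ≤ α * (lam ^ (k + 1) / (k + 1)!) := by
  have hratio : 1 ≤ α * lam / (k + 1) := (one_le_div (by positivity)).2 hk
  calc lam ^ k / k ! ≤ α * lam / (k + 1) * (lam ^ k / k !) :=
        le_mul_of_one_le_left (by positivity) hratio
    _ = α * (lam ^ (k + 1) / (k + 1)!) := by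
        rw [pow_succ, Nat.factorial_succ]
        push_cast
        field_simp

lemma pow_div_factorial_le_pow_mul {lam α : ℝ} {r k : ℕ} (hlam : 0 ≤ lam) (hα : 0 ≤ α)
    (hk : (k : ℝ) ≤ α * lam) (hr : r ≤ k) :
    lam ^ r / r ! ≤ α ^ (k - r) * (lam ^ k / k !) := by
  induction k, hr using Nat.le_induction with
  | base => simp
  | succ k hrk ih =>
    push_cast at hk
    calc lam ^ r / r ! ≤ α ^ (k - r) * (lam ^ k / k !) := ih (by linarith)
      _ ≤ α ^ (k - r) * (α * (lam ^ (k + 1) / (k + 1)!)) := by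
        gcongr
        exact pow_div_factorial_le_mul_pow_succ_div_factorial hlam hk
      _ = α ^ (k + 1 - r) * (lam ^ (k + 1) / (k + 1)!) := by
        rw [Nat.sub_add_comm hrk, pow_succ]
        ring

lemma sum_range_pow_div_factorial_lt {lam α : ℝ} {k : ℕ} (hlam : 0 < lam) (hα0 : 0 < α)
    (hα1 : α < 1) (hk : (k : ℝ) ≤ α * lam) :
    ∑ r ∈ range (k + 1), lam ^ r / r ! < lam ^ k / k ! / (1 - α) := by
  calc ∑ r ∈ range (k + 1), lam ^ r / r !
      ≤ ∑ r ∈ range (k + 1), α ^ (k - r) * (lam ^ k / k !) :=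
        sum_le_sum fun r hr ↦
          pow_div_factorial_le_pow_mul hlam.le hα0.le hk (Nat.lt_succ_iff.1 (mem_range.1 hr))
    _ = (∑ j ∈ range (k + 1), α ^ j) * (lam ^ k / k !) := by
        rw [← sum_mul]
        exact congrArg (· * _) (sum_range_reflect (α ^ ·) (k + 1))
    _ < 1 / (1 - α) * (lam ^ k / k !) := by
        have hgeom : ∑ j ∈ range (k + 1), α ^ j < 1 / (1 - α) := by
          rw [lt_div_iff₀ (by linarith), geom_sum_mul_neg]
          linarith [pow_pos hα0 (k + 1)]
        exact mul_lt_mul_of_pos_right hgeom (by positivity)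
    _ = lam ^ k / k ! / (1 - α) := by ring

lemma sq_one_sub_div_two_le_one_sub_add_mul_log {α : ℝ} (hα0 : 0 < α) (hα1 : α ≤ 1) :
    (1 - α) ^ 2 / 2 ≤ 1 - α + α * log α := by
  have hlog : (α - α⁻¹) / 2 ≤ log α :=
    sinh_log hα0 ▸ sinh_le_self_iff.2 (log_nonpos hα0.le hα1)
  linear_combination α * hlog + mul_inv_cancel₀ hα0.ne' / 2

lemma exp_neg_mul_pow_div_pow_eq {lam α : ℝ} {k : ℕ} (hlam : 0 < lam) (hα : 0 < α)
    (hkα : (k : ℝ) = α * lam) :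
    exp (-lam) * lam ^ k / (k / exp 1) ^ k = exp (-(lam * (1 - α + α * log α))) := by
  have hbase : lam / (k / exp 1) = exp (1 - log α) := by
    rw [exp_sub, exp_log hα, hkα]
    field_simp
  rw [mul_div_assoc, ← div_pow, hbase, ← exp_nat_mul, ← exp_add, hkα]
  ring_nf

theorem poisson_lower_tail_general (lam α : ℝ) (hlam : 0 < lam) (hα0 : 0 < α) (hα1 : α < 1)
    (k : ℕ) (hkα : (k : ℝ) = α * lam) :
    (∑ r ∈ Finset.range (k + 1), Real.exp (-lam) * lam ^ r / (r.factorial : ℝ))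
      < Real.exp (-(lam * (1 - α) ^ 2 / 2)) / ((1 - α) * Real.sqrt (2 * π * α * lam)) := by
  have hk : (0 : ℝ) < k := hkα ▸ mul_pos hα0 hlam
  have h1α : 0 < 1 - α := by linarith
  rw [show 2 * π * α * lam = 2 * π * k by rw [hkα]; ring]
  calc ∑ r ∈ range (k + 1), exp (-lam) * lam ^ r / r !
      = exp (-lam) * ∑ r ∈ range (k + 1), lam ^ r / r ! := by
        simp only [mul_sum, mul_div_assoc]
    _ < exp (-lam) * (lam ^ k / k ! / (1 - α)) := by
        gcongr
        exact sum_range_pow_div_factorial_lt hlam hα0 hα1 hkα.le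
    _ ≤ exp (-lam) * (lam ^ k / (√(2 * π * k) * (k / exp 1) ^ k) / (1 - α)) := by
        gcongr
        exact Stirling.le_factorial_stirling k
    _ = exp (-lam) * lam ^ k / (k / exp 1) ^ k / ((1 - α) * √(2 * π * k)) := by
        field_simp
    _ ≤ exp (-(lam * (1 - α) ^ 2 / 2)) / ((1 - α) * √(2 * π * k)) := by
        rw [exp_neg_mul_pow_div_pow_eq hlam hα0 hkα]
        gcongr
        linear_combination lam * sq_one_sub_div_two_le_one_sub_add_mul_log hα0 hα1.le

theorem poisson_lower_tail (lam α : ℝ) (hlam : 0 < lam) (hα0 : 0 < α) (hα1 : α < 1)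
    (k : ℕ) (hk : 1 ≤ k) (hkα : (k : ℝ) = α * lam) :
    (∑ r ∈ Finset.range (k + 1), Real.exp (-lam) * lam ^ r / (r.factorial : ℝ))
      < Real.exp (-(lam * (1 - α) ^ 2 / 2)) / ((1 - α) * Real.sqrt (2 * π * α * lam)) :=
  poisson_lower_tail_general lam α hlam hα0 hα1 k hkα
end

section
/- Let n ≥ 2, a > 0, w ≥ 0, σ > 0, and define β₁ = (w + (1 + 1/n)a)/(2a + w). If (2n-1)·(n(a+w)+a)/((n-1)a) < e^{(2a+w)σ}, then β₁·(1 + (2n-1)e^{-(2a+w)σ}) < 1. -/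
/-!
With `x = e^{(2a+w)σ}` the conclusion reads `β₁ (1 + (2n-1)/x) < 1`, which for `β₁ < 1` is
equivalent to `(2n-1) β₁/(1-β₁) < x`; and `β₁/(1-β₁) = (n(a+w)+a)/((n-1)a)`, since
`1 - β₁ = (1 - 1/n) a/(2a+w)`.
-/

lemma mul_one_add_mul_inv_lt_one_iff {β c x : ℝ} (hβ : β < 1) (hx : 0 < x) :
    β * (1 + c * x⁻¹) < 1 ↔ c * (β / (1 - β)) < x := by
  have hβ' : 0 < 1 - β := sub_pos.mpr hβ
  rw [← mul_div_assoc, div_lt_iff₀ hβ', ← sub_pos, ← sub_pos (b := _ * _)]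
  have key : 1 - β * (1 + c * x⁻¹) = (x * (1 - β) - c * β) / x := by
    field_simp
    ring
  rw [key]
  exact div_pos_iff_of_pos_right hx

noncomputable def beta₁ (n a w : ℝ) : ℝ := (w + (1 + 1 / n) * a) / (2 * a + w)

section beta₁

variable {n a w : ℝ}

lemma one_sub_beta₁ (hD : 2 * a + w ≠ 0) :
    1 - beta₁ n a w = (1 - 1 / n) * a / (2 * a + w) := by
  rw [eq_div_iff hD, sub_mul, beta₁, div_mul_cancel₀ _ hD]
  ring

lemma beta₁_lt_one (hn : 1 < n) (ha : 0 < a) (hw : 0 ≤ w) : beta₁ n a w < 1 := by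
  rw [← sub_pos, one_sub_beta₁ (by positivity)]
  have : 0 < 1 - 1 / n := by rw [sub_pos, div_lt_one (by positivity)]; exact hn
  positivity

lemma beta₁_div_one_sub_beta₁ (hn : 1 < n) (ha : 0 < a) (hw : 0 ≤ w) :
    beta₁ n a w / (1 - beta₁ n a w) = (n * (a + w) + a) / ((n - 1) * a) := by
  have hn₀ : n ≠ 0 := by positivity
  have hn₁ : n - 1 ≠ 0 := sub_ne_zero.mpr hn.ne'
  rw [one_sub_beta₁ (by positivity)]
  unfold beta₁
  field_simp
  ring

end beta₁

theorem exp_decay_condition_general (n : ℕ) (hn : 2 ≤ n) (a w σ : ℝ)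
    (ha : 0 < a) (hw : 0 ≤ w)
    (h : (2 * (n : ℝ) - 1) * ((n : ℝ) * (a + w) + a) / (((n : ℝ) - 1) * a)
          < Real.exp ((2 * a + w) * σ)) :
    (w + (1 + 1 / (n : ℝ)) * a) / (2 * a + w)
      * (1 + (2 * (n : ℝ) - 1) * Real.exp (-((2 * a + w) * σ))) < 1 := by
  have hn : (1 : ℝ) < n := by exact_mod_cast hn
  change beta₁ n a w * _ < 1
  rw [Real.exp_neg, mul_one_add_mul_inv_lt_one_iff (beta₁_lt_one hn ha hw)
    (Real.exp_pos _), beta₁_div_one_sub_beta₁ hn ha hw, ← mul_div_assoc]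
  exact h

theorem exp_decay_condition (n : ℕ) (hn : 2 ≤ n) (a w σ : ℝ)
    (ha : 0 < a) (hw : 0 ≤ w) (hσ : 0 < σ)
    (h : (2 * (n : ℝ) - 1) * ((n : ℝ) * (a + w) + a) / (((n : ℝ) - 1) * a)
          < Real.exp ((2 * a + w) * σ)) :
    (w + (1 + 1 / (n : ℝ)) * a) / (2 * a + w)
      * (1 + (2 * (n : ℝ) - 1) * Real.exp (-((2 * a + w) * σ))) < 1 :=
  exp_decay_condition_general n hn a w σ ha hw h
end
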